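/- Let C ⊆ {0,1}* be a prefix-free set of codewords with Kraft sum S = Σ_{w∈C} 2^{-L(w)} ≤ 1, and for each w ∈ C let p̃_w be a probability measure on a measurable space. Define the implied distribution p_Im = S^{-1}·Σ_{w∈C} 2^{-L(w)} p̃_w. Suppose a distribution p equals Σ_{w∈C} a(w) p̃_w for some probability mass function a on C. Then Σ_{w∈C} a(w)·L(w) ≥ D(p ‖ p_Im), the Kullback–Leibler divergence of p from p_Im. -/

import Mathlib

open MeasureTheory

-- Kullback–Leibler divergence in bits: `D(p‖q) = ∫ log₂(dp/dq) dp`, taken to be `+∞`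
-- if `p` is not absolutely continuous w.r.t. `q` or the integral is not defined.
open Classical in
noncomputable def klBits {α : Type*} [MeasurableSpace α] (p q : Measure α) : EReal :=
  if p ≪ q ∧ Integrable (fun x => Real.logb 2 (p.rnDeriv q x).toReal) p then
    ((∫ x, Real.logb 2 (p.rnDeriv q x).toReal ∂p : ℝ) : EReal)
  else ⊤

/-! With `f = dp/dq` for `q = p_Im`, the bound `log x ≤ x - 1` at `x = 2^{-ℓ} s` reads
`log₂ s ≤ ℓ + (2^{-ℓ} s - 1) / ln 2`. Integrate it against each piece `m_i` of `p = Σ m_i`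
(here `m_w = a(w) p̃_w`) and sum: the correction term is
`(∫ f d(Σ 2^{-ℓ_i} m_i) - p(X)) / ln 2`, which is `≤ 0` because `Σ 2^{-ℓ_i} m_i ≤ q`
(as `a ≤ 1` and `S ≤ 1`) and `∫ f dq ≤ p(X)`. Working with the positive and negative parts
of `log₂ f` in `ℝ≥0∞` also gives integrability: the negative part has finite integral since
`s · (-log₂ s) ≤ 1 / ln 2`. -/

open scoped ENNReal

namespace Real

theorem logb_two_add_inv_log_two_le (n : ℕ) {s : ℝ} (hs : 0 < s) :
    logb 2 s + (log 2)⁻¹ ≤ n + (log 2)⁻¹ * ((2 ^ n)⁻¹ * s) := by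
  have hscaled : log ((2 ^ n)⁻¹ * s) ≤ (2 ^ n)⁻¹ * s - 1 :=
    log_le_sub_one_of_pos (by positivity)
  rw [log_mul (by positivity) hs.ne', log_inv, log_pow] at hscaled
  have key : log s + 1 ≤ n * log 2 + (2 ^ n)⁻¹ * s := by linarith
  calc logb 2 s + (log 2)⁻¹ = (log s + 1) / log 2 := by rw [logb, add_div, one_div]
    _ ≤ (n * log 2 + (2 ^ n)⁻¹ * s) / log 2 := by gcongr
    _ = n + (log 2)⁻¹ * ((2 ^ n)⁻¹ * s) := by field_simp

theorem mul_neg_logb_two_le {s : ℝ} (hs : 0 ≤ s) : s * -logb 2 s ≤ (log 2)⁻¹ := by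
  have h := negMulLog_le_one_sub_self hs
  rw [negMulLog] at h
  calc s * -logb 2 s = -s * log s / log 2 := by rw [logb]; ring
    _ ≤ 1 / log 2 := by gcongr; linarith
    _ = (log 2)⁻¹ := one_div _

end Real

namespace ENNReal

theorem ofReal_logb_add_le (n : ℕ) {t : ℝ≥0∞} (ht : t ≠ 0) :
    ENNReal.ofReal (Real.logb 2 t.toReal) + ENNReal.ofReal (Real.log 2)⁻¹
      ≤ n + ENNReal.ofReal (-Real.logb 2 t.toReal)
        + ENNReal.ofReal (Real.log 2)⁻¹ * ((2 ^ n)⁻¹ * t) := by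
  obtain rfl | ht' := eq_or_ne t ⊤
  · rw [mul_top (by simp), mul_top (by simp; positivity)]
    exact le_top.trans_eq (add_top _).symm
  obtain ⟨s, hs, rfl⟩ : ∃ s : ℝ, 0 < s ∧ t = ENNReal.ofReal s :=
    ⟨t.toReal, toReal_pos ht ht', (ofReal_toReal ht').symm⟩
  have hbound := Real.logb_two_add_inv_log_two_le n hs
  have hinv : 0 ≤ (Real.log 2)⁻¹ := by positivity
  have hpow : ((2 : ℝ≥0∞) ^ n)⁻¹ = ENNReal.ofReal ((2 : ℝ) ^ n)⁻¹ := by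
    rw [ofReal_inv_of_pos (by positivity), ofReal_pow zero_le_two, ofReal_ofNat]
  rw [toReal_ofReal hs.le, hpow, ← ofReal_mul (by positivity), ← ofReal_mul hinv,
    ← ofReal_natCast]
  rcases le_or_gt 0 (Real.logb 2 s) with hx | hx
  · rw [ofReal_of_nonpos (neg_nonpos.2 hx), add_zero, ← ofReal_add hx hinv,
      ← ofReal_add (by positivity) (by positivity)]
    exact ofReal_le_ofReal hbound
  · rw [ofReal_of_nonpos hx.le, zero_add, ← ofReal_add (by positivity) (by linarith),
      ← ofReal_add (by linarith) (by positivity)]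
    exact ofReal_le_ofReal (by linarith)

theorem mul_ofReal_neg_logb_le (t : ℝ≥0∞) :
    t * ENNReal.ofReal (-Real.logb 2 t.toReal) ≤ ENNReal.ofReal (Real.log 2)⁻¹ := by
  obtain rfl | ht := eq_or_ne t ⊤
  · simp
  rw [← ofReal_toReal ht, ← ofReal_mul toReal_nonneg, toReal_ofReal toReal_nonneg]
  exact ofReal_le_ofReal (Real.mul_neg_logb_two_le toReal_nonneg)

end ENNReal

section

variable {α : Type*} [MeasurableSpace α] {p q : Measure α}

theorem MeasureTheory.Measure.absolutelyContinuous_of_sum_smul_le {ι : Type*}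
    {m : ι → Measure α} {c : ι → ℝ≥0∞} (hc : ∀ i, c i ≠ 0)
    (h : Measure.sum (fun i => c i • m i) ≤ q) : Measure.sum m ≪ q :=
  absolutelyContinuous_sum_left fun i =>
    (absolutelyContinuous_smul (hc i)).trans ((le_sum _ i).trans h).absolutelyContinuous

theorem MeasureTheory.Measure.sum_smul_le_smul_sum {ι : Type*} {ν : ι → Measure α}
    {a : ι → ℝ≥0∞} (ha : ∀ i, a i ≤ 1) {r : ℝ≥0∞} (hr : 1 ≤ r) :
    Measure.sum (fun i => a i • ν i) ≤ r • Measure.sum ν := by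
  refine Measure.le_iff.2 fun s hs => ?_
  simp only [Measure.smul_apply, Measure.sum_apply _ hs, smul_eq_mul]
  calc ∑' i, a i * ν i s ≤ ∑' i, ν i s :=
        ENNReal.tsum_le_tsum fun i => mul_le_of_le_one_left' (ha i)
    _ ≤ r * ∑' i, ν i s := le_mul_of_one_le_left' hr

theorem measurable_logb_rnDeriv (p q : Measure α) :
    Measurable fun x => Real.logb 2 (p.rnDeriv q x).toReal := by
  unfold Real.logb
  fun_prop

theorem lintegral_ofReal_neg_logb_rnDeriv_le [p.HaveLebesgueDecomposition q] (hpq : p ≪ q) :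
    ∫⁻ x, ENNReal.ofReal (-Real.logb 2 (p.rnDeriv q x).toReal) ∂p
      ≤ ENNReal.ofReal (Real.log 2)⁻¹ * q Set.univ := by
  rw [← lintegral_rnDeriv_mul hpq
    (f := fun x => ENNReal.ofReal (-Real.logb 2 (p.rnDeriv q x).toReal))
    (measurable_logb_rnDeriv p q).neg.ennreal_ofReal.aemeasurable]
  calc _ ≤ ∫⁻ _, ENNReal.ofReal (Real.log 2)⁻¹ ∂q :=
        lintegral_mono fun x => ENNReal.mul_ofReal_neg_logb_le _
    _ = _ := lintegral_const _

theorem tsum_mul_lintegral_rnDeriv_le {ι : Type*} {m : ι → Measure α} {c : ι → ℝ≥0∞}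
    (h : Measure.sum (fun i => c i • m i) ≤ q) :
    ∑' i, c i * ∫⁻ x, p.rnDeriv q x ∂m i ≤ p Set.univ :=
  calc ∑' i, c i * ∫⁻ x, p.rnDeriv q x ∂m i
      = ∫⁻ x, p.rnDeriv q x ∂Measure.sum (fun i => c i • m i) := by
        simp only [lintegral_sum_measure, lintegral_smul_measure, smul_eq_mul]
    _ ≤ ∫⁻ x, p.rnDeriv q x ∂q := lintegral_mono' h le_rfl
    _ ≤ p Set.univ := Measure.lintegral_rnDeriv_le

theorem lintegral_ofReal_logb_rnDeriv_le [IsFiniteMeasure p] [p.HaveLebesgueDecomposition q]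
    {ι : Type*} (m : ι → Measure α) (ℓ : ι → ℕ) (hp : p = Measure.sum m)
    (hq : Measure.sum (fun i => ((2 : ℝ≥0∞) ^ ℓ i)⁻¹ • m i) ≤ q) :
    ∫⁻ x, ENNReal.ofReal (Real.logb 2 (p.rnDeriv q x).toReal) ∂p
      ≤ ∑' i, m i Set.univ * ℓ i
        + ∫⁻ x, ENNReal.ofReal (-Real.logb 2 (p.rnDeriv q x).toReal) ∂p := by
  set f := p.rnDeriv q
  set pos := fun x => ENNReal.ofReal (Real.logb 2 (f x).toReal)
  set neg := fun x => ENNReal.ofReal (-Real.logb 2 (f x).toReal)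
  set c := ENNReal.ofReal (Real.log 2)⁻¹
  set w := fun i => ((2 : ℝ≥0∞) ^ ℓ i)⁻¹
  have hpq : p ≪ q := hp ▸ Measure.absolutelyContinuous_of_sum_smul_le (by simp) hq
  have hsum (g : α → ℝ≥0∞) : ∫⁻ x, g x ∂p = ∑' i, ∫⁻ x, g x ∂m i := by
    rw [hp, lintegral_sum_measure]
  have hf_ne_zero (i : ι) : ∀ᵐ x ∂m i, f x ≠ 0 :=
    ((Measure.rnDeriv_pos hpq).filter_mono
      (hp ▸ Measure.le_sum m i : m i ≤ p).absolutelyContinuous.ae_le).mono fun x hx => hx.ne'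
  have hneg_meas : Measurable neg := (measurable_logb_rnDeriv p q).neg.ennreal_ofReal
  -- Adding `c * p univ` to both sides avoids subtracting the `-1 / ln 2` of the pointwise bound.
  refine ENNReal.le_of_add_le_add_right (a := c * p Set.univ) (by finiteness) ?_
  calc ∫⁻ x, pos x ∂p + c * p Set.univ
      = ∑' i, ∫⁻ x, (pos x + c) ∂m i := by
        rw [← hsum, lintegral_add_right _ measurable_const, lintegral_const]
    _ ≤ ∑' i, ∫⁻ x, (ℓ i + neg x + c * (w i * f x)) ∂m i :=
        ENNReal.tsum_le_tsum fun i => lintegral_mono_ae <|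
          (hf_ne_zero i).mono fun x hx => ENNReal.ofReal_logb_add_le (ℓ i) hx
    _ = ∑' i, (m i Set.univ * ℓ i + ∫⁻ x, neg x ∂m i
          + c * (w i * ∫⁻ x, f x ∂m i)) := by
        refine tsum_congr fun i => ?_
        rw [lintegral_add_right _ (((Measure.measurable_rnDeriv p q).const_mul _).const_mul _),
          lintegral_add_right _ hneg_meas, lintegral_const, mul_comm,
          lintegral_const_mul' _ _ (by finiteness), lintegral_const_mul' _ _ (by simp [w])]
    _ = ∑' i, m i Set.univ * ℓ i + ∫⁻ x, neg x ∂p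
          + c * ∑' i, w i * ∫⁻ x, f x ∂m i := by
        rw [ENNReal.tsum_add, ENNReal.tsum_add, ENNReal.tsum_mul_left, hsum]
    _ ≤ ∑' i, m i Set.univ * ℓ i + ∫⁻ x, neg x ∂p + c * p Set.univ := by
        gcongr
        exact tsum_mul_lintegral_rnDeriv_le hq

theorem klBits_le_of_lintegral_ofReal_logb_le {A : ℝ≥0∞} (hpq : p ≪ q) (hA : A ≠ ⊤)
    (hneg : ∫⁻ x, ENNReal.ofReal (-Real.logb 2 (p.rnDeriv q x).toReal) ∂p ≠ ⊤)
    (hpos : ∫⁻ x, ENNReal.ofReal (Real.logb 2 (p.rnDeriv q x).toReal) ∂p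
      ≤ A + ∫⁻ x, ENNReal.ofReal (-Real.logb 2 (p.rnDeriv q x).toReal) ∂p) :
    klBits p q ≤ A := by
  set F := fun x => Real.logb 2 (p.rnDeriv q x).toReal
  have hF : Measurable F := measurable_logb_rnDeriv p q
  have hpos_ne_top : ∫⁻ x, ENNReal.ofReal (F x) ∂p ≠ ⊤ :=
    ne_top_of_le_ne_top (ENNReal.add_ne_top.2 ⟨hA, hneg⟩) hpos
  have hint : Integrable F p := by
    have hF_pos : Integrable (fun x => max (F x) 0) p :=
      (lintegral_ofReal_ne_top_iff_integrable (by fun_prop)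
        (ae_of_all _ fun _ => le_max_right _ _)).1 (by simpa using hpos_ne_top)
    have hF_neg : Integrable (fun x => max (-F x) 0) p :=
      (lintegral_ofReal_ne_top_iff_integrable (by fun_prop)
        (ae_of_all _ fun _ => le_max_right _ _)).1 (by simpa using hneg)
    refine (hF_pos.sub hF_neg).congr (ae_of_all _ fun x => ?_)
    exact max_zero_sub_max_neg_zero_eq_self (F x)
  have hreal := ENNReal.toReal_mono (ENNReal.add_ne_top.2 ⟨hA, hneg⟩) hpos
  rw [ENNReal.toReal_add hA hneg] at hreal
  rw [klBits, if_pos ⟨hpq, hint⟩, integral_eq_lintegral_pos_part_sub_lintegral_neg_part hint,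
    ← EReal.coe_ennreal_toReal hA]
  exact EReal.coe_le_coe_iff.2 (by linarith)

theorem klBits_le_tsum_measure_univ_mul [IsFiniteMeasure p] [IsFiniteMeasure q] {ι : Type*}
    (m : ι → Measure α) (ℓ : ι → ℕ) (hp : p = Measure.sum m)
    (hq : Measure.sum (fun i => ((2 : ℝ≥0∞) ^ ℓ i)⁻¹ • m i) ≤ q) :
    klBits p q ≤ ((∑' i, m i Set.univ * ℓ i : ℝ≥0∞) : EReal) := by
  obtain hA | hA := eq_or_ne (∑' i, m i Set.univ * ℓ i) ⊤
  · simp [hA]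
  have hpq : p ≪ q := hp ▸ Measure.absolutelyContinuous_of_sum_smul_le (by simp) hq
  refine klBits_le_of_lintegral_ofReal_logb_le hpq hA ?_
    (lintegral_ofReal_logb_rnDeriv_le m ℓ hp hq)
  exact ne_top_of_le_ne_top (by finiteness) (lintegral_ofReal_neg_logb_rnDeriv_le hpq)

end

theorem stmt_12_general {α : Type*} [MeasurableSpace α] (C : Set (List Bool))
    (ptil : List Bool → Measure α) (hprob : ∀ w ∈ C, IsProbabilityMeasure (ptil w))
    (hS : (∑' w : C, (2 : ENNReal) ^ (-(w.1.length : ℤ))) ≤ 1)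
    (a : C → ENNReal) (ha : ∑' w : C, a w = 1)
    (p : Measure α) (hp : p = Measure.sum (fun w : C => a w • ptil w)) :
    klBits p ((∑' w : C, (2 : ENNReal) ^ (-(w.1.length : ℤ)))⁻¹ •
        Measure.sum (fun w : C => (2 : ENNReal) ^ (-(w.1.length : ℤ)) • ptil w))
      ≤ ((∑' w : C, a w * (w.1.length : ENNReal)) : ENNReal) := by
  have hprobC (w : C) : IsProbabilityMeasure (ptil w) := hprob w w.2
  simp only [ENNReal.zpow_neg, zpow_natCast] at hS ⊢
  set S := ∑' w : C, ((2 : ℝ≥0∞) ^ w.1.length)⁻¹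
  set μ := Measure.sum fun w : C => ((2 : ℝ≥0∞) ^ w.1.length)⁻¹ • ptil w
  have hS0 : S ≠ 0 := by
    obtain ⟨w⟩ : Nonempty C := not_isEmpty_iff.1 fun _ => by simp at ha
    exact ((ENNReal.le_tsum w).trans_lt' (by simp)).ne'
  have : IsFiniteMeasure μ := ⟨by
    simpa [μ, S, Measure.sum_apply _ MeasurableSet.univ] using hS.trans_lt ENNReal.one_lt_top⟩
  have : IsFiniteMeasure (S⁻¹ • μ) := μ.smul_finite (ENNReal.inv_ne_top.2 hS0)
  have : IsProbabilityMeasure p :=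
    ⟨by simpa [hp, Measure.sum_apply _ MeasurableSet.univ] using ha⟩
  have hq : Measure.sum (fun w : C => ((2 : ℝ≥0∞) ^ w.1.length)⁻¹ • (a w • ptil w))
      ≤ S⁻¹ • μ := by
    simp_rw [smul_comm _ (a _)]
    exact Measure.sum_smul_le_smul_sum (fun w => ha ▸ ENNReal.le_tsum w)
      (ENNReal.one_le_inv.2 hS)
  simpa using klBits_le_tsum_measure_univ_mul (fun w : C => a w • ptil w) (fun w => w.1.length)
    hp hq

/-- For a prefix-free codeword set `C` with Kraft sum `S ≤ 1`, decoder distributions `p̃_w`,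
and `p = Σ_w a(w) p̃_w`, the expected codeword length is at least `D(p ‖ p_Im)` where
`p_Im = S⁻¹ Σ_w 2^{-L(w)} p̃_w` is the implied distribution. -/
theorem stmt_12 {α : Type*} [MeasurableSpace α] (C : Set (List Bool))
    (hpf : ∀ w ∈ C, ∀ w' ∈ C, w <+: w' → w = w')
    (ptil : List Bool → Measure α) (hprob : ∀ w ∈ C, IsProbabilityMeasure (ptil w))
    (hS : (∑' w : C, (2 : ENNReal) ^ (-(w.1.length : ℤ))) ≤ 1)
    (a : C → ENNReal) (ha : ∑' w : C, a w = 1)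
    (p : Measure α) (hp : p = Measure.sum (fun w : C => a w • ptil w)) :
    klBits p ((∑' w : C, (2 : ENNReal) ^ (-(w.1.length : ℤ)))⁻¹ •
        Measure.sum (fun w : C => (2 : ENNReal) ^ (-(w.1.length : ℤ)) • ptil w))
      ≤ ((∑' w : C, a w * (w.1.length : ENNReal)) : ENNReal) :=
  stmt_12_general C ptil hprob hS a ha p hp
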